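/- arXiv:2107.06259 — 7 statements merged into one kernel-verified Lean document; each statement's English description precedes it below -/
import Mathlib

section
/- A continuous distribution on [0,∞) with CDF F and density f is regular (i.e., the virtual value φ(x) = x - (1-F(x))/f(x) is non-decreasing) if and only if the function h_r(x) = 1/(1 - F(x)) is convex on the support where F(x) < 1. -/
/-!
Write `K = 2 f² + (1 - F) f'`. Direct differentiation gives `φ' = K / f²` and
`(1 / (1 - F))'' = (f / (1 - F)²)' = K / (1 - F)³`. Both denominators are positive on the
support, so `φ` is non-decreasing iff `K ≥ 0` iff the derivative of `1 / (1 - F)` is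
non-decreasing, i.e. iff `1 / (1 - F)` is convex.
-/

open Filter Topology Set

section DerivativeCriteria

variable {s : Set ℝ} {u u' : ℝ → ℝ}

theorem HasDerivAt.nonneg_of_monotoneOn_of_mem_interior {x a : ℝ} (hd : HasDerivAt u a x)
    (hu : MonotoneOn u s) (hx : x ∈ interior s) : 0 ≤ a := by
  have hacc : AccPt x (𝓟 s) := by
    rw [AccPt, inf_eq_left.2 (le_principal_iff.2
      (mem_nhdsWithin_of_mem_nhds (mem_interior_iff_mem_nhds.1 hx)))]
    infer_instance
  exact hd.hasDerivWithinAt.nonneg_of_monotoneOn hacc hu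

theorem Convex.monotoneOn_iff_hasDerivAt_nonneg (hs : Convex ℝ s)
    (hu : ∀ x ∈ s, HasDerivAt u (u' x) x) :
    MonotoneOn u s ↔ ∀ x ∈ interior s, 0 ≤ u' x := by
  refine ⟨fun hmono x hx => (hu x (interior_subset hx)).nonneg_of_monotoneOn_of_mem_interior
    hmono hx, fun hnonneg => monotoneOn_of_deriv_nonneg hs ?_ ?_ ?_⟩
  · exact fun x hx => (hu x hx).continuousAt.continuousWithinAt
  · exact fun x hx => (hu x (interior_subset hx)).differentiableAt.differentiableWithinAt
  · intro x hx
    rw [(hu x (interior_subset hx)).deriv]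
    exact hnonneg x hx

theorem Convex.convexOn_iff_monotoneOn_hasDerivAt (hs : Convex ℝ s)
    (hu : ∀ x ∈ s, HasDerivAt u (u' x) x) :
    ConvexOn ℝ s u ↔ MonotoneOn u' s := by
  have hderiv : EqOn (deriv u) u' s := fun x hx => (hu x hx).deriv
  refine ⟨fun hconv => ?_, fun hmono => ?_⟩
  · exact (hconv.monotoneOn_deriv fun x hx => (hu x hx).differentiableAt).congr hderiv
  · exact MonotoneOn.convexOn_of_deriv hs (fun x hx => (hu x hx).continuousAt.continuousWithinAt)
      (fun x hx => (hu x (interior_subset hx)).differentiableAt.differentiableWithinAt)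
      ((hmono.mono interior_subset).congr (hderiv.mono interior_subset).symm)

end DerivativeCriteria

section VirtualValue

variable {F f : ℝ → ℝ} {x f' : ℝ}

theorem hasDerivAt_virtualValue (hF : HasDerivAt F (f x) x) (hf : HasDerivAt f f' x)
    (hfx : f x ≠ 0) :
    HasDerivAt (fun y => y - (1 - F y) / f y) ((2 * f x ^ 2 + (1 - F x) * f') / f x ^ 2) x := by
  refine ((hasDerivAt_id x).sub ((hF.const_sub 1).div hf hfx)).congr_deriv ?_
  field_simp
  ring

theorem hasDerivAt_one_div_one_sub (hF : HasDerivAt F (f x) x) (hFx : F x ≠ 1) :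
    HasDerivAt (fun y => 1 / (1 - F y)) (f x / (1 - F x) ^ 2) x := by
  simp only [one_div]
  refine ((hF.const_sub 1).inv (sub_ne_zero.2 hFx.symm)).congr_deriv ?_
  rw [neg_neg]

theorem hasDerivAt_div_one_sub_sq (hF : HasDerivAt F (f x) x) (hf : HasDerivAt f f' x)
    (hFx : F x ≠ 1) :
    HasDerivAt (fun y => f y / (1 - F y) ^ 2)
      ((2 * f x ^ 2 + (1 - F x) * f') / (1 - F x) ^ 3) x := by
  have hne : 1 - F x ≠ 0 := sub_ne_zero.2 hFx.symm
  refine (hf.div ((hF.const_sub 1).fun_pow 2) (pow_ne_zero 2 hne)).congr_deriv ?_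
  field_simp
  ring

end VirtualValue

theorem convex_setOf_nonneg_and_lt {F : ℝ → ℝ} (hF : MonotoneOn F (Ici 0)) (c : ℝ) :
    Convex ℝ {x | 0 ≤ x ∧ F x < c} := by
  refine (ordConnected_iff.2 fun x hx y hy _ z hz => ?_).convex
  exact ⟨hx.1.trans hz.1, (hF (hx.1.trans hz.1) hy.1 hz.2).trans_lt hy.2⟩

theorem regular_iff_link_convex_general
    (F f : ℝ → ℝ)
    (hFmono : MonotoneOn F (Set.Ici 0))
    (S : Set ℝ) (hS : S = {x | 0 ≤ x ∧ F x < 1})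
    (hderiv : ∀ x ∈ S, HasDerivAt F (f x) x)
    (hfpos : ∀ x ∈ S, 0 < f x)
    (hC2 : ∀ x ∈ S, ∃ f' : ℝ, HasDerivAt f f' x) :
    MonotoneOn (fun x => x - (1 - F x) / f x) S ↔
      ConvexOn ℝ S (fun x => 1 / (1 - F x)) := by
  have hconv : Convex ℝ S := hS ▸ convex_setOf_nonneg_and_lt hFmono 1
  have hFlt : ∀ x ∈ S, 0 < 1 - F x := fun x hx => sub_pos.2 (hS ▸ hx).2
  have hf : ∀ x ∈ S, HasDerivAt f (deriv f x) x := fun x hx =>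
    (hC2 x hx).elim fun _ h => h.differentiableAt.hasDerivAt
  have hFne x (hx : x ∈ S) : F x ≠ 1 := (sub_pos.1 (hFlt x hx)).ne
  rw [hconv.monotoneOn_iff_hasDerivAt_nonneg fun x hx =>
      hasDerivAt_virtualValue (hderiv x hx) (hf x hx) (hfpos x hx).ne',
    hconv.convexOn_iff_monotoneOn_hasDerivAt fun x hx =>
      hasDerivAt_one_div_one_sub (hderiv x hx) (hFne x hx),
    hconv.monotoneOn_iff_hasDerivAt_nonneg fun x hx =>
      hasDerivAt_div_one_sub_sq (hderiv x hx) (hf x hx) (hFne x hx)]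
  refine forall₂_congr fun x hx => ?_
  have hxS := interior_subset hx
  rw [le_div_iff₀ (pow_pos (hfpos x hxS) 2), le_div_iff₀ (pow_pos (hFlt x hxS) 3),
    zero_mul, zero_mul]

/-- A continuous distribution with CDF F and density f is regular
(virtual value φ(x) = x - (1-F(x))/f(x) non-decreasing) iff h_r(x) = 1/(1-F(x)) is
convex on the support where F(x) < 1. -/
theorem regular_iff_link_convex
    (F f : ℝ → ℝ)
    (hF01 : ∀ x, 0 ≤ F x ∧ F x ≤ 1)
    (hF0 : F 0 = 0)
    (hFmono : MonotoneOn F (Set.Ici 0))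
    (S : Set ℝ) (hS : S = {x | 0 ≤ x ∧ F x < 1})
    (hderiv : ∀ x ∈ S, HasDerivAt F (f x) x)
    (hfpos : ∀ x ∈ S, 0 < f x)
    (hC2 : ∀ x ∈ S, ∃ f' : ℝ, HasDerivAt f f' x) :
    MonotoneOn (fun x => x - (1 - F x) / f x) S ↔
      ConvexOn ℝ S (fun x => 1 / (1 - F x)) :=
  regular_iff_link_convex_general F f hFmono S hS hderiv hfpos hC2
end

section
/- For a discrete distribution supported on {0,1,...,n} with probability masses p_i and survival masses s_i = P(X ≥ i), the discrete virtual value φ(i) = i - s_i/p_i is non-decreasing in i if and only if the sequence h(i) = 1/s_i is convex, i.e., h(i+2) - h(i+1) ≥ h(i+1) - h(i) for all valid i. -/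
/-!
Writing `p i = s i - s (i + 1)`, both conditions at `i` become the same inequality
`2 s_i s_{i+2} ≤ s_{i+1} (s_i + s_{i+2})`, i.e. `s_{i+1}` is at least the harmonic mean of its
neighbours. At the last step `s_{n+1} = 0`, so monotonicity of `φ` there holds automatically.
-/

open Finset

lemma div_sub_div_le_one_iff_of_strictAnti {a b c : ℝ} (hab : b < a) (hbc : c < b) :
    b / (b - c) - a / (a - b) ≤ 1 ↔ 2 * a * c ≤ b * (a + c) := by
  rw [div_sub_div _ _ (sub_pos.2 hbc).ne' (sub_pos.2 hab).ne',
    div_le_one (mul_pos (sub_pos.2 hbc) (sub_pos.2 hab))]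
  constructor <;> intro h <;> linarith

lemma one_div_sub_one_div_le_iff {a b c : ℝ} (ha : 0 < a) (hb : 0 < b) (hc : 0 < c) :
    1 / b - 1 / a ≤ 1 / c - 1 / b ↔ 2 * a * c ≤ b * (a + c) := by
  have hsum : 1 / a + 1 / c = (a + c) / (a * c) := by
    rw [div_add_div _ _ ha.ne' hc.ne']; ring
  calc 1 / b - 1 / a ≤ 1 / c - 1 / b ↔ 2 / b ≤ (a + c) / (a * c) := by
        have h2 : 2 / b = 1 / b + 1 / b := by ring
        rw [← hsum, h2]; constructor <;> intro h <;> linarith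
    _ ↔ 2 * a * c ≤ b * (a + c) := by
        rw [div_le_div_iff₀ hb (mul_pos ha hc)]; constructor <;> intro h <;> linarith

section Survival

variable {n : ℕ} {p s : ℕ → ℝ} (hs : ∀ i, s i = ∑ j ∈ Icc i n, p j)
include hs

lemma survival_eq_add_succ {i : ℕ} (hi : i ≤ n) : s i = p i + s (i + 1) := by
  rw [hs, hs, Icc_add_one_left_eq_Ioc, add_sum_Ioc_eq_sum_Icc hi]

lemma survival_eq_zero_of_lt {i : ℕ} (hi : n < i) : s i = 0 := by
  rw [hs, Icc_eq_empty_of_lt hi, sum_empty]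

lemma survival_pos (hp : ∀ i, i ≤ n → 0 < p i) {i : ℕ} (hi : i ≤ n) : 0 < s i := by
  rw [hs]
  exact sum_pos (fun j hj ↦ hp j (mem_Icc.1 hj).2) ⟨i, mem_Icc.2 ⟨le_rfl, hi⟩⟩

lemma virtualValue_le_succ_iff (hp : ∀ i, i ≤ n → 0 < p i) {i : ℕ} (hi : i + 1 ≤ n) :
    (i : ℝ) - s i / p i ≤ ((i + 1 : ℕ) : ℝ) - s (i + 1) / p (i + 1) ↔
      2 * s i * s (i + 2) ≤ s (i + 1) * (s i + s (i + 2)) := by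
  have hp₀ : p i = s i - s (i + 1) := by linarith [survival_eq_add_succ hs (i := i) (by omega)]
  have hp₁ : p (i + 1) = s (i + 1) - s (i + 2) := by linarith [survival_eq_add_succ hs hi]
  have hφ : (i : ℝ) - s i / p i ≤ ((i + 1 : ℕ) : ℝ) - s (i + 1) / p (i + 1) ↔
      s (i + 1) / p (i + 1) - s i / p i ≤ 1 := by
    push_cast; constructor <;> intro h <;> linarith
  rw [hφ, hp₀, hp₁]
  exact div_sub_div_le_one_iff_of_strictAnti (by linarith [hp i (by omega)])
    (by linarith [hp (i + 1) hi])

lemma link_convex_at_iff (hp : ∀ i, i ≤ n → 0 < p i) {i : ℕ} (hi : i + 2 ≤ n) :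
    1 / s (i + 1) - 1 / s i ≤ 1 / s (i + 2) - 1 / s (i + 1) ↔
      2 * s i * s (i + 2) ≤ s (i + 1) * (s i + s (i + 2)) :=
  one_div_sub_one_div_le_iff (survival_pos hs hp (by omega)) (survival_pos hs hp (by omega))
    (survival_pos hs hp hi)

end Survival

theorem discrete_regular_iff_link_convex_general
    (n : ℕ) (p : ℕ → ℝ)
    (hp : ∀ i, i ≤ n → 0 < p i)
    (s : ℕ → ℝ) (hs : ∀ i, s i = ∑ j ∈ Finset.Icc i n, p j) :
    (∀ i, i + 1 ≤ n →
        (i : ℝ) - s i / p i ≤ ((i + 1 : ℕ) : ℝ) - s (i + 1) / p (i + 1)) ↔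
      (∀ i, i + 2 ≤ n →
        1 / s (i + 1) - 1 / s i ≤ 1 / s (i + 2) - 1 / s (i + 1)) := by
  constructor
  · intro hφ i hi
    rw [link_convex_at_iff hs hp hi, ← virtualValue_le_succ_iff hs hp (by omega)]
    exact hφ i (by omega)
  · intro hh i hi
    rw [virtualValue_le_succ_iff hs hp hi]
    rcases Nat.lt_or_ge n (i + 2) with hlast | hi₂
    · rw [survival_eq_zero_of_lt hs hlast, mul_zero, add_zero]
      exact (mul_pos (survival_pos hs hp hi) (survival_pos hs hp (by omega))).le
    · exact (link_convex_at_iff hs hp hi₂).1 (hh i hi₂)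

/-- For a discrete distribution on {0,…,n} with masses p_i > 0 and
survival masses s_i = P(X ≥ i), the discrete virtual value φ(i) = i - s_i/p_i is
non-decreasing iff the sequence h(i) = 1/s_i is convex. -/
theorem discrete_regular_iff_link_convex
    (n : ℕ) (p : ℕ → ℝ)
    (hp : ∀ i, i ≤ n → 0 < p i)
    (hsum : ∑ i ∈ Finset.range (n + 1), p i = 1)
    (s : ℕ → ℝ) (hs : ∀ i, s i = ∑ j ∈ Finset.Icc i n, p j) :
    (∀ i, i + 1 ≤ n →
        (i : ℝ) - s i / p i ≤ ((i + 1 : ℕ) : ℝ) - s (i + 1) / p (i + 1)) ↔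
      (∀ i, i + 2 ≤ n →
        1 / s (i + 1) - 1 / s i ≤ 1 / s (i + 2) - 1 / s (i + 1)) :=
  discrete_regular_iff_link_convex_general n p hp s hs
end

section
/- Let F be the CDF of an MHR distribution with optimal monopoly revenue OPT_F = max_x x(1-F(x)) ≤ 1. Then any optimal reserve price P*_F (a maximizer of x(1-F(x))) satisfies P*_F ≤ e. -/
/-!
Write `1 - F = exp (-h)` with `h` convex and `h 0 = 0`, and let `u = h P`. If `u > 1`, then at
the lower price `P / u` convexity gives `h (P / u) ≤ u / u = 1`, so optimality of `P` forces
`(P / u) e⁻¹ ≤ P e⁻ᵘ`, i.e. `exp (u - 1) ≤ u`, contradicting `u < exp (u - 1)` for `u ≠ 1`.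
Hence `u ≤ 1`, and `P e⁻¹ ≤ P e⁻ᵘ = OPT ≤ 1`.
-/

open Real Set

theorem ConvexOn.map_smul_le_of_map_zero {𝕜 E β : Type*}
    [Ring 𝕜] [PartialOrder 𝕜] [IsOrderedRing 𝕜] [AddCommMonoid E]
    [AddCommMonoid β] [PartialOrder β] [Module 𝕜 E] [Module 𝕜 β]
    {s : Set E} {f : E → β} (hf : ConvexOn 𝕜 s f) (h0 : (0 : E) ∈ s) (hf0 : f 0 = 0)
    {x : E} (hx : x ∈ s) {t : 𝕜} (ht0 : 0 ≤ t) (ht1 : t ≤ 1) :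
    f (t • x) ≤ t • f x := by
  simpa [hf0] using hf.2 h0 hx (sub_nonneg.2 ht1) ht0 (sub_add_cancel 1 t)

theorem hazard_le_one_of_isMaxOn_revenue {h : ℝ → ℝ} (hconv : ConvexOn ℝ (Ici 0) h)
    (h0 : h 0 = 0) {P : ℝ} (hP : 0 < P)
    (hmax : IsMaxOn (fun x => x * exp (-h x)) (Ici 0) P) :
    h P ≤ 1 := by
  by_contra! hu
  set u := h P with hu_def
  have hu0 : 0 < u := one_pos.trans hu
  have hx : h (u⁻¹ * P) ≤ 1 := by
    simpa [← hu_def, inv_mul_cancel₀ hu0.ne'] using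
      hconv.map_smul_le_of_map_zero self_mem_Ici h0 (mem_Ici.2 hP.le)
        (inv_nonneg.2 hu0.le) (inv_le_one_of_one_le₀ hu.le)
  have hrev : u⁻¹ * P * exp (-1) ≤ P * exp (-u) :=
    (mul_le_mul_of_nonneg_left (exp_le_exp.2 (neg_le_neg hx)) (by positivity)).trans
      (hmax (mem_Ici.2 (by positivity)))
  have hrev' : u⁻¹ * exp (-1) ≤ exp (-u) :=
    le_of_mul_le_mul_right (by linear_combination hrev) hP
  have hexp : exp (u - 1) ≤ u := by
    rwa [show exp (u - 1) = exp (-1) / exp (-u) by rw [← exp_sub]; ring_nf,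
      div_le_iff₀ (exp_pos _), ← inv_mul_le_iff₀ hu0]
  linarith [add_one_lt_exp (sub_ne_zero.2 hu.ne')]

theorem mhr_optimal_price_le_e_general
    (F : ℝ → ℝ)
    (hF0 : F 0 = 0)
    (hlt : ∀ x ∈ Set.Ici (0 : ℝ), F x < 1)
    (hconv : ConvexOn ℝ (Set.Ici 0) (fun x => -Real.log (1 - F x)))
    (P : ℝ) (hP : 0 ≤ P)
    (hopt : ∀ x ∈ Set.Ici (0 : ℝ), x * (1 - F x) ≤ P * (1 - F P))
    (hOPT : P * (1 - F P) ≤ 1) :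
    P ≤ Real.exp 1 := by
  rcases hP.eq_or_lt with rfl | hPpos
  · exact (exp_pos 1).le
  have hsurv : ∀ x ∈ Ici (0 : ℝ), exp (-(-log (1 - F x))) = 1 - F x := fun x hx => by
    rw [neg_neg, exp_log (sub_pos.2 (hlt x hx))]
  have hhaz : -log (1 - F P) ≤ 1 :=
    hazard_le_one_of_isMaxOn_revenue hconv (by simp [hF0]) hPpos <| isMaxOn_iff.2 fun x hx => by
      simpa only [hsurv x hx, hsurv P hP] using hopt x hx
  have hsurvP : exp (-1) ≤ 1 - F P := by
    rw [← hsurv P hP]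
    exact exp_le_exp.2 (neg_le_neg hhaz)
  calc P = P * exp (-1) * exp 1 := by rw [mul_assoc, ← exp_add]; simp
    _ ≤ P * (1 - F P) * exp 1 := by gcongr
    _ ≤ 1 * exp 1 := by gcongr
    _ = exp 1 := one_mul _

/-- If F is an MHR CDF (its link h(x) = -log(1-F(x)) is convex,
non-decreasing, with h(0) = 0) and the optimal revenue is at most 1, then any
optimal reserve price is at most e. -/
theorem mhr_optimal_price_le_e
    (F : ℝ → ℝ)
    (hF0 : F 0 = 0)
    (h0le : ∀ x ∈ Set.Ici (0 : ℝ), 0 ≤ F x)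
    (hlt : ∀ x ∈ Set.Ici (0 : ℝ), F x < 1)
    (hconv : ConvexOn ℝ (Set.Ici 0) (fun x => -Real.log (1 - F x)))
    (hmono : MonotoneOn (fun x => -Real.log (1 - F x)) (Set.Ici 0))
    (P : ℝ) (hP : 0 ≤ P)
    (hopt : ∀ x ∈ Set.Ici (0 : ℝ), x * (1 - F x) ≤ P * (1 - F P))
    (hOPT : P * (1 - F P) ≤ 1) :
    P ≤ Real.exp 1 :=
  mhr_optimal_price_le_e_general F hF0 hlt hconv P hP hopt hOPT
end

section
/- Let F be the CDF of an MHR distribution with optimal reserve price P* and optimal revenue equal to 1. Then 1 - F(P*) ≥ 1/e, i.e., the probability of sale at the optimal price is at least 1/e. -/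
/-- If F is an MHR CDF with optimal reserve price P* and optimal
revenue exactly 1, then the sale probability at P* is at least 1/e, i.e.
1 - F(P*) ≥ e⁻¹. -/
theorem mhr_sale_probability_ge_inv_e
    (F : ℝ → ℝ)
    (hF0 : F 0 = 0)
    (h0le : ∀ x ∈ Set.Ici (0 : ℝ), 0 ≤ F x)
    (hlt : ∀ x ∈ Set.Ici (0 : ℝ), F x < 1)
    (hconv : ConvexOn ℝ (Set.Ici 0) (fun x => -Real.log (1 - F x)))
    (hmono : MonotoneOn (fun x => -Real.log (1 - F x)) (Set.Ici 0))
    (P : ℝ) (hP : 0 ≤ P)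
    (hopt : ∀ x ∈ Set.Ici (0 : ℝ), x * (1 - F x) ≤ P * (1 - F P))
    (hOPT : P * (1 - F P) = 1) :
    Real.exp (-1) ≤ 1 - F P := by
  by_contra hcon
  push_neg at hcon
  set q : ℝ := 1 - F P with hq
  have hFPlt : F P < 1 := hlt P hP
  have hqpos : 0 < q := by simp [hq]; linarith
  have hPpos : 0 < P := by
    rcases lt_or_eq_of_le hP with h | h
    · exact h
    · exfalso; rw [← h] at hOPT; simp at hOPT
  -- q = 1/P
  have hqP : q = 1 / P := by
    field_simp
    linarith [hOPT]
  -- t := -log q = log P > 1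
  set t : ℝ := -Real.log q with ht
  have htlogP : t = Real.log P := by
    rw [ht, hqP, Real.log_div one_ne_zero (ne_of_gt hPpos), Real.log_one]
    ring
  have ht1 : 1 < t := by
    have : Real.log q < -1 := by
      have := Real.log_lt_log hqpos hcon
      simpa [Real.log_exp] using this
    linarith [this]
  have htpos : 0 < t := by linarith
  -- x* = P / t
  set x : ℝ := P / t with hx
  have hxpos : 0 < x := div_pos hPpos htpos
  have hxmem : x ∈ Set.Ici (0 : ℝ) := le_of_lt hxpos
  -- convexity: h(x) ≤ 1
  have h0mem : (0 : ℝ) ∈ Set.Ici (0 : ℝ) := Set.mem_Ici.2 le_rfl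
  have hPmem : P ∈ Set.Ici (0 : ℝ) := hP
  have ha : (0 : ℝ) ≤ 1 - 1 / t := by
    have : 1 / t ≤ 1 := by
      rw [div_le_one htpos]; linarith
    linarith
  have hb : (0 : ℝ) ≤ 1 / t := by positivity
  have hab : (1 - 1 / t) + 1 / t = 1 := by ring
  have hcx := hconv.2 h0mem hPmem ha hb hab
  have hcomb : (1 - 1 / t) • (0 : ℝ) + (1 / t) • P = x := by
    simp [hx, smul_eq_mul]; ring
  rw [hcomb] at hcx
  have hf0 : -Real.log (1 - F 0) = 0 := by simp [hF0]
  have hhx : -Real.log (1 - F x) ≤ 1 := by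
    have hfP : -Real.log (1 - F P) = t := rfl
    simp only [smul_eq_mul] at hcx
    rw [hf0] at hcx
    calc -Real.log (1 - F x) ≤ (1 - 1 / t) * 0 + 1 / t * (-Real.log (1 - F P)) := hcx
    _ = (1 / t) * t := by rw [hfP]; ring
    _ = 1 := by field_simp
  -- so 1 - F x ≥ exp(-1)
  have hFxlt : F x < 1 := hlt x hxmem
  have hFxpos : 0 < 1 - F x := by linarith
  have hexp : Real.exp (-1) ≤ 1 - F x := by
    have : -1 ≤ Real.log (1 - F x) := by linarith
    calc Real.exp (-1) ≤ Real.exp (Real.log (1 - F x)) := Real.exp_le_exp.2 this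
    _ = 1 - F x := Real.exp_log hFxpos
  -- revenue bound
  have hrev : x * Real.exp (-1) ≤ 1 := by
    calc x * Real.exp (-1) ≤ x * (1 - F x) := by
          exact mul_le_mul_of_nonneg_left hexp (le_of_lt hxpos)
    _ ≤ P * (1 - F P) := hopt x hxmem
    _ = 1 := hOPT
  -- so P * exp(-1) ≤ t = log P
  have hPe : P * Real.exp (-1) ≤ t := by
    have : P / t * Real.exp (-1) ≤ 1 := hrev
    calc P * Real.exp (-1) = (P / t * Real.exp (-1)) * t := by field_simp
    _ ≤ 1 * t := by
        exact mul_le_mul_of_nonneg_right this (le_of_lt htpos)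
    _ = t := one_mul t
  -- but log P < P/e since P > e (as log P = t > 1)
  have hPgtE : Real.exp 1 < P := by
    have : Real.log (Real.exp 1) < Real.log P := by rw [Real.log_exp]; linarith [htlogP ▸ ht1]
    exact (by
      calc Real.exp 1 = Real.exp (Real.log (Real.exp 1)) := by rw [Real.exp_log (Real.exp_pos 1)]
      _ < Real.exp (Real.log P) := Real.exp_lt_exp.2 this
      _ = P := Real.exp_log hPpos)
  -- log P < P / e
  have hlogP : Real.log P < P * Real.exp (-1) := by
    have hy : P * Real.exp (-1) ≠ 1 := by
      have : 1 < P * Real.exp (-1) := by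
        have := mul_lt_mul_of_pos_right hPgtE (Real.exp_pos (-1))
        rwa [← Real.exp_add, add_neg_cancel, Real.exp_zero] at this
      linarith
    have hypos : 0 < P * Real.exp (-1) := by positivity
    have := Real.log_lt_sub_one_of_pos hypos hy
    have hlog : Real.log (P * Real.exp (-1)) = Real.log P - 1 := by
      rw [Real.log_mul (ne_of_gt hPpos) (ne_of_gt (Real.exp_pos _)), Real.log_exp]; ring
    linarith
  rw [htlogP] at hPe
  linarith
end

section
/- Let F and F̄ be regular CDFs with F̄ stochastically dominating F (F̄(x) ≤ F(x) for all x) and Kolmogorov distance at most β. Let P̄ be an optimal reserve price for F̄ and OPT_F, OPT_{F̄} the respective optimal revenues. Then OPT_F / OPT_{F̄} ≥ 1 - β·h(P̄), where h(x) = 1/(1-F(x)). -/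
/-- For regular CDFs F̄ ≤ F within Kolmogorov distance β, with P̄ an
optimal reserve price for F̄ and OPT_F, OPT_F̄ the optimal revenues,
OPT_F / OPT_F̄ ≥ 1 - β·h(P̄), where h(x) = 1/(1-F(x)). -/
theorem regular_revenue_ratio_lower_bound
    (F Fb : ℝ → ℝ) (β : ℝ) (hβ : 0 ≤ β)
    (h01 : ∀ x ∈ Set.Ici (0 : ℝ), 0 ≤ Fb x ∧ Fb x ≤ F x ∧ F x ≤ 1)
    (hreg : ConvexOn ℝ {x : ℝ | 0 ≤ x ∧ F x < 1} (fun x => 1 / (1 - F x)))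
    (hregb : ConvexOn ℝ {x : ℝ | 0 ≤ x ∧ Fb x < 1} (fun x => 1 / (1 - Fb x)))
    (hks : ∀ x ∈ Set.Ici (0 : ℝ), |F x - Fb x| ≤ β)
    (P : ℝ) (hP : 0 ≤ P) (hFP : F P < 1)
    (hPopt : ∀ x ∈ Set.Ici (0 : ℝ), x * (1 - Fb x) ≤ P * (1 - Fb P))
    (hOb : 0 < P * (1 - Fb P))
    (OF : ℝ)
    (hOF : IsLUB {r : ℝ | ∃ x ∈ Set.Ici (0 : ℝ), r = x * (1 - F x)} OF) :
    1 - β * (1 / (1 - F P)) ≤ OF / (P * (1 - Fb P)) := by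
  have hA : 0 < 1 - F P := by linarith
  have hFb : Fb P ≤ F P := (h01 P hP).2.1
  have habs : F P - Fb P ≤ β := (abs_le.mp (hks P hP)).2
  have hPF : P * (1 - F P) ≤ OF := hOF.1 ⟨P, hP, rfl⟩
  rw [le_div_iff₀ hOb]
  have hh : (1 / (1 - F P)) * (1 - F P) = 1 := one_div_mul_cancel (ne_of_gt hA)
  have h1 : 0 ≤ 1 / (1 - F P) := by positivity
  nlinarith [mul_nonneg hβ hP, mul_nonneg (mul_nonneg hβ hP) h1,
    mul_nonneg (mul_nonneg hβ hP) (sub_nonneg.mpr hFb),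
    mul_le_mul_of_nonneg_left habs hP]
end

section
/- Let D = D₁ × ... × Dₙ and D' = D'₁ × ... × D'ₙ be product distributions on ℝⁿ with d_k(D_i, D'_i) ≤ α_i for each i (coordinate-wise Kolmogorov distance). Then for every increasing set A ⊆ ℝⁿ (a set whose indicator is a monotone function), |P_{v~D}(v ∈ A) - P_{v~D'}(v ∈ A)| ≤ Σᵢ αᵢ. -/
/-!
Hybrid argument: replace the coordinate distributions one at a time. By Tonelli, the product
step only needs the bound for the slices of an upper set, which are again upper sets. In one
dimension a proper nonempty upper set is a ray `Ici c` or `Ioi c`; the Kolmogorov bound controls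
`Ici c = (Iio c)ᶜ` directly and `Ioi c` by continuity from below along rays `Ici (u k)`, `u k ↓ c`.
-/

open Set MeasureTheory
open scoped ENNReal

def UpperSetExcessLE {X : Type*} [MeasurableSpace X] [Preorder X] (μ ν : Measure X) (ε : ℝ≥0∞) :
    Prop :=
  ∀ ⦃s : Set X⦄, MeasurableSet s → IsUpperSet s → μ s ≤ ν s + ε

namespace UpperSetExcessLE

variable {X Y : Type*} [MeasurableSpace X] [Preorder X] [MeasurableSpace Y] [Preorder Y]

theorem of_measurePreserving {μ ν : Measure X} {μ' ν' : Measure Y} {ε : ℝ≥0∞} (e : X ≃ᵐ Y)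
    (he : Monotone e.symm) (hμ : MeasurePreserving e μ μ') (hν : MeasurePreserving e ν ν')
    (h : UpperSetExcessLE μ' ν' ε) : UpperSetExcessLE μ ν ε := by
  intro s hs hup
  have hs_eq : e ⁻¹' (e.symm ⁻¹' s) = s := e.preimage_symm_preimage s
  rw [← hs_eq, hμ.measure_preimage_equiv, hν.measure_preimage_equiv]
  exact h (e.symm.measurable hs) (hup.preimage he)

theorem prod {μ₁ ν₁ : Measure X} {μ₂ ν₂ : Measure Y} [IsProbabilityMeasure μ₁]
    [IsProbabilityMeasure ν₂] [SFinite μ₂] [SFinite ν₁] {a b : ℝ≥0∞}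
    (h₁ : UpperSetExcessLE μ₁ ν₁ a) (h₂ : UpperSetExcessLE μ₂ ν₂ b) :
    UpperSetExcessLE (μ₁.prod μ₂) (ν₁.prod ν₂) (a + b) := by
  intro s hs hup
  have hμ₂ : μ₁.prod μ₂ s ≤ μ₁.prod ν₂ s + b := by
    rw [Measure.prod_apply hs, Measure.prod_apply hs]
    calc ∫⁻ x, μ₂ (Prod.mk x ⁻¹' s) ∂μ₁ ≤ ∫⁻ x, (ν₂ (Prod.mk x ⁻¹' s) + b) ∂μ₁ :=
          lintegral_mono fun x ↦ h₂ (measurable_prodMk_left hs)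
            (hup.preimage (monotone_const.prodMk monotone_id))
      _ = ∫⁻ x, ν₂ (Prod.mk x ⁻¹' s) ∂μ₁ + b := by simp [lintegral_add_right _ measurable_const]
  have hμ₁ : μ₁.prod ν₂ s ≤ ν₁.prod ν₂ s + a := by
    rw [Measure.prod_apply_symm hs, Measure.prod_apply_symm hs]
    calc ∫⁻ y, μ₁ ((·, y) ⁻¹' s) ∂ν₂ ≤ ∫⁻ y, (ν₁ ((·, y) ⁻¹' s) + a) ∂ν₂ :=
          lintegral_mono fun y ↦ h₁ (measurable_prodMk_right hs)
            (hup.preimage (monotone_id.prodMk monotone_const))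
      _ = ∫⁻ y, ν₁ ((·, y) ⁻¹' s) ∂ν₂ + a := by simp [lintegral_add_right _ measurable_const]
  calc μ₁.prod μ₂ s ≤ ν₁.prod ν₂ s + a + b := hμ₂.trans (by gcongr)
    _ = ν₁.prod ν₂ s + (a + b) := add_assoc _ _ _

theorem pi {n : ℕ} {X : Fin n → Type*} [∀ i, MeasurableSpace (X i)] [∀ i, Preorder (X i)]
    {μ ν : ∀ i, Measure (X i)} [∀ i, IsProbabilityMeasure (μ i)]
    [∀ i, IsProbabilityMeasure (ν i)] {ε : Fin n → ℝ≥0∞}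
    (h : ∀ i, UpperSetExcessLE (μ i) (ν i) (ε i)) :
    UpperSetExcessLE (Measure.pi μ) (Measure.pi ν) (∑ i, ε i) := by
  induction n with
  | zero =>
    intro s _ _
    simp [Measure.pi_of_empty μ, Measure.pi_of_empty ν (x := isEmptyElim)]
  | succ n ih =>
    rw [Fin.sum_univ_succ]
    simp only [← Fin.succAbove_zero]
    exact of_measurePreserving (MeasurableEquiv.piFinSuccAbove X 0)
      (Fin.insertNthOrderIso X 0).monotone (measurePreserving_piFinSuccAbove μ 0)
      (measurePreserving_piFinSuccAbove ν 0) ((h 0).prod (ih fun j ↦ h _))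

end UpperSetExcessLE

theorem IsUpperSet.mem_Ici_Ioi_of_nonempty_of_ne_univ {α : Type*}
    [ConditionallyCompleteLinearOrder α] {s : Set α} (hs : IsUpperSet s) (hne : s.Nonempty) (huniv : s ≠ univ) :
    s ∈ ({Ici (sInf s), Ioi (sInf s)} : Set (Set α)) := by
  obtain ⟨z, hz⟩ := (ne_univ_iff_exists_notMem s).1 huniv
  have hbdd : BddBelow s := ⟨z, fun x hx ↦ le_of_not_ge fun hxz ↦ hz (hs hxz hx)⟩
  refine mem_Ici_Ioi_of_subset_of_subset (fun x hx ↦ ?_) fun x hx ↦ csInf_le hbdd hx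
  obtain ⟨y, hy, hyx⟩ := exists_lt_of_csInf_lt hne hx
  exact hs hyx.le hy

section Real

variable {μ ν : Measure ℝ} [IsProbabilityMeasure μ] [IsProbabilityMeasure ν] {ε : ℝ≥0∞}

theorem measure_Ici_le_of_measure_Iio_le (h : ∀ x, ν (Iio x) ≤ μ (Iio x) + ε) (x : ℝ) :
    μ (Ici x) ≤ ν (Ici x) + ε := by
  rw [← compl_Iio, prob_compl_eq_one_sub measurableSet_Iio,
    prob_compl_eq_one_sub measurableSet_Iio, tsub_le_iff_right]
  calc (1 : ℝ≥0∞) = 1 - ν (Iio x) + ν (Iio x) := (tsub_add_cancel_of_le prob_le_one).symm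
    _ ≤ 1 - ν (Iio x) + (μ (Iio x) + ε) := by gcongr; exact h x
    _ = 1 - ν (Iio x) + ε + μ (Iio x) := by ring

theorem measure_Ioi_le_of_measure_Iio_le (h : ∀ x, ν (Iio x) ≤ μ (Iio x) + ε) (x : ℝ) :
    μ (Ioi x) ≤ ν (Ioi x) + ε := by
  obtain ⟨u, hu_anti, hxu, hu⟩ := exists_seq_strictAnti_tendsto x
  rw [← iUnion_Ici_eq_Ioi_of_lt_of_tendsto hxu hu,
    Monotone.measure_iUnion fun _ _ hij ↦ Ici_subset_Ici.2 (hu_anti.antitone hij)]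
  exact iSup_le fun k ↦ (measure_Ici_le_of_measure_Iio_le h (u k)).trans
    (by gcongr; exact subset_iUnion (fun k ↦ Ici (u k)) k)

theorem upperSetExcessLE_of_measure_Iio_le (h : ∀ x, ν (Iio x) ≤ μ (Iio x) + ε) :
    UpperSetExcessLE μ ν ε := by
  intro s _ hs
  rcases s.eq_empty_or_nonempty with rfl | hne
  · simp
  by_cases huniv : s = univ
  · simp [huniv]
  rcases hs.mem_Ici_Ioi_of_nonempty_of_ne_univ hne huniv with hs_eq | hs_eq <;> rw [hs_eq]
  · exact measure_Ici_le_of_measure_Iio_le h _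
  · exact measure_Ioi_le_of_measure_Iio_le h _

end Real

theorem ENNReal.le_add_ofReal_of_abs_toReal_sub_le {a b : ℝ≥0∞} {c : ℝ} (hb : b ≠ ⊤)
    (h : |a.toReal - b.toReal| ≤ c) : b ≤ a + ENNReal.ofReal c :=
  calc b = ENNReal.ofReal b.toReal := (ENNReal.ofReal_toReal hb).symm
    _ ≤ ENNReal.ofReal (a.toReal + c) := by gcongr; linarith [neg_abs_le (a.toReal - b.toReal)]
    _ ≤ a + ENNReal.ofReal c :=
      ENNReal.ofReal_add_le.trans (by gcongr; exact ENNReal.ofReal_toReal_le)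

theorem toReal_measure_pi_le_of_abs_toReal_measure_Iio_sub_le {n : ℕ} {μ ν : Fin n → Measure ℝ}
    [∀ i, IsProbabilityMeasure (μ i)] [∀ i, IsProbabilityMeasure (ν i)] {α : Fin n → ℝ}
    (h : ∀ i x, |(μ i (Iio x)).toReal - (ν i (Iio x)).toReal| ≤ α i)
    {A : Set (Fin n → ℝ)} (hA : MeasurableSet A) (hup : IsUpperSet A) :
    (Measure.pi μ A).toReal ≤ (Measure.pi ν A).toReal + ∑ i, α i := by
  have hα : ∀ i, 0 ≤ α i := fun i ↦ (abs_nonneg _).trans (h i 0)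
  have hexcess := UpperSetExcessLE.pi (fun i ↦ upperSetExcessLE_of_measure_Iio_le fun x ↦
    ENNReal.le_add_ofReal_of_abs_toReal_sub_le (measure_ne_top _ _) (h i x)) hA hup
  rw [← ENNReal.ofReal_sum_of_nonneg fun i _ ↦ hα i] at hexcess
  simpa [ENNReal.toReal_ofReal (Finset.sum_nonneg fun i _ ↦ hα i)] using
    ENNReal.toReal_le_add hexcess (measure_ne_top _ _) ENNReal.ofReal_ne_top

/-- For product distributions D, D' on ℝⁿ with coordinate-wise
Kolmogorov distances d_k(D_i, D'_i) ≤ α_i, the probabilities of any increasing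
(upward-closed) measurable set A differ by at most Σᵢ αᵢ. -/
theorem kolmogorov_increasing_set_bound
    (n : ℕ) (μ ν : Fin n → Measure ℝ)
    [∀ i, IsProbabilityMeasure (μ i)] [∀ i, IsProbabilityMeasure (ν i)]
    (α : Fin n → ℝ)
    (hks : ∀ i : Fin n, ∀ x : ℝ,
      |((μ i) (Set.Iio x)).toReal - ((ν i) (Set.Iio x)).toReal| ≤ α i)
    (A : Set (Fin n → ℝ)) (hA : MeasurableSet A)
    (hinc : ∀ v ∈ A, ∀ w : Fin n → ℝ, (∀ i, v i ≤ w i) → w ∈ A) :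
    |((Measure.pi μ) A).toReal - ((Measure.pi ν) A).toReal| ≤ ∑ i, α i := by
  have hup : IsUpperSet A := fun v w hvw hv ↦ hinc v hv w hvw
  have hμν := toReal_measure_pi_le_of_abs_toReal_measure_Iio_sub_le hks hA hup
  have hνμ := toReal_measure_pi_le_of_abs_toReal_measure_Iio_sub_le
    (fun i x ↦ (abs_sub_comm _ _).trans_le (hks i x)) hA hup
  rw [abs_sub_le_iff]
  constructor <;> linarith
end

section
/- Let D and D' be product distributions on ℝⁿ with coordinate-wise Kolmogorov distances d_k(D_i, D'_i) ≤ α_i. Then for every coordinate-wise increasing function u : ℝⁿ → [0, ū], |E_{v~D}[u(v)] - E_{v~D'}[u(v)]| ≤ ū · Σᵢ αᵢ. -/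
/-!
Hybrid argument: pass from `Measure.pi μ` to `Measure.pi ν` one coordinate at a time. After
integrating out the other coordinates (Fubini) one is left with a monotone function `f` of a
single real variable with values in `[0, ū]`. By the layer-cake formula, `∫ f ∂μ - ∫ f ∂ν` is the
integral over `t ∈ (0, ū]` of `μ S_t - ν S_t` for the upper sets `S_t = {f ≥ t}`, and an upper set
of `ℝ` is a ray, whose measures under `μ` and `ν` differ by at most the Kolmogorov distance.
-/

open MeasureTheory Set Filter Topology

theorem IsUpperSet.eq_empty_or_eq_univ_or_eq_Ioi_or_eq_Ici {α : Type*}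
    [ConditionallyCompleteLinearOrder α] {s : Set α} (hs : IsUpperSet s) :
    s = ∅ ∨ s = univ ∨ s = Ioi (sInf s) ∨ s = Ici (sInf s) := by
  rcases s.eq_empty_or_nonempty with rfl | hne
  · exact Or.inl rfl
  by_cases hbdd : BddBelow s
  · have hIoi : Ioi (sInf s) ⊆ s := fun x hx => by
      obtain ⟨y, hys, hyx⟩ := exists_lt_of_csInf_lt hne hx
      exact hs hyx.le hys
    have hIci : s ⊆ Ici (sInf s) := fun x hx => csInf_le hbdd hx
    by_cases hmem : sInf s ∈ s
    · exact Or.inr <| Or.inr <| Or.inr <| hIci.antisymm (hs.Ici_subset hmem)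
    · refine Or.inr <| Or.inr <| Or.inl <| subset_antisymm ?_ hIoi
      exact fun x hx => (hIci hx).lt_of_ne fun h => hmem (h ▸ hx)
  · refine Or.inr <| Or.inl <| eq_univ_of_forall fun x => ?_
    obtain ⟨y, hys, hyx⟩ := not_bddBelow_iff.1 hbdd x
    exact hs hyx.le hys

theorem Measurable.integrable_of_mem_Icc {X : Type*} [MeasurableSpace X] {μ : Measure X}
    [IsFiniteMeasure μ] {f : X → ℝ} {C : ℝ} (hf : Measurable f) (hfC : ∀ x, f x ∈ Icc 0 C) :
    Integrable f μ :=
  .of_bound hf.aestronglyMeasurable C <| ae_of_all _ fun x => by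
    rw [Real.norm_of_nonneg (hfC x).1]; exact (hfC x).2

theorem integral_mem_Icc_of_mem_Icc {X : Type*} [MeasurableSpace X] {μ : Measure X}
    [IsProbabilityMeasure μ] {f : X → ℝ} {C : ℝ} (hf : Measurable f) (hfC : ∀ x, f x ∈ Icc 0 C) :
    ∫ x, f x ∂μ ∈ Icc 0 C := by
  refine ⟨integral_nonneg fun x => (hfC x).1, ?_⟩
  calc ∫ x, f x ∂μ ≤ ∫ _, C ∂μ :=
        integral_mono (hf.integrable_of_mem_Icc hfC) (integrable_const C) fun x => (hfC x).2
    _ = C := by simp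

section KolmogorovBound

variable (μ ν : Measure ℝ) [IsProbabilityMeasure μ] [IsProbabilityMeasure ν] {α : ℝ}

theorem abs_measureReal_Iic_sub_le (hks : ∀ x, |μ.real (Iio x) - ν.real (Iio x)| ≤ α) (c : ℝ) :
    |μ.real (Iic c) - ν.real (Iic c)| ≤ α := by
  have hIic : ⋂ r > c, Iio r = Iic c := by
    ext x; simp [forall_gt_iff_le]
  have hlim : ∀ m : Measure ℝ, [IsProbabilityMeasure m] →
      Tendsto (fun r => m.real (Iio r)) (𝓝[>] c) (𝓝 (m.real (Iic c))) := fun m _ => by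
    rw [← hIic]
    refine (ENNReal.tendsto_toReal (measure_ne_top m _)).comp <|
      tendsto_measure_biInter_gt (fun r _ => measurableSet_Iio.nullMeasurableSet)
        (fun _ _ _ hij => Iio_subset_Iio hij) ⟨c + 1, by linarith, measure_ne_top m _⟩
  exact le_of_tendsto ((hlim μ).sub (hlim ν)).abs (Eventually.of_forall hks)

theorem abs_measureReal_sub_le_of_isUpperSet
    (hks : ∀ x, |μ.real (Iio x) - ν.real (Iio x)| ≤ α) {s : Set ℝ} (hs : IsUpperSet s) :
    |μ.real s - ν.real s| ≤ α := by
  have hα : 0 ≤ α := (abs_nonneg _).trans (hks 0)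
  rcases hs.eq_empty_or_eq_univ_or_eq_Ioi_or_eq_Ici with h | h | h | h <;> rw [h]
  · simpa using hα
  · simpa using hα
  · rw [← compl_Iic, probReal_compl_eq_one_sub measurableSet_Iic,
      probReal_compl_eq_one_sub measurableSet_Iic, abs_sub_comm]
    simpa using abs_measureReal_Iic_sub_le μ ν hks _
  · rw [← compl_Iio, probReal_compl_eq_one_sub measurableSet_Iio,
      probReal_compl_eq_one_sub measurableSet_Iio, abs_sub_comm]
    simpa using hks _

theorem abs_integral_sub_le_of_monotone (hks : ∀ x, |μ.real (Iio x) - ν.real (Iio x)| ≤ α)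
    {f : ℝ → ℝ} (hf : Monotone f) {C : ℝ} (hfC : ∀ x, f x ∈ Icc 0 C) :
    |∫ x, f x ∂μ - ∫ x, f x ∂ν| ≤ C * α := by
  have hC : 0 ≤ C := (hfC 0).1.trans (hfC 0).2
  have hlayer : ∀ m : Measure ℝ, [IsProbabilityMeasure m] →
      ∫ x, f x ∂m = ∫ t in Ioc 0 C, m.real {x | t ≤ f x} := fun m _ =>
    (hf.measurable.integrable_of_mem_Icc hfC).integral_eq_integral_Ioc_meas_le
      (ae_of_all _ fun x => (hfC x).1) (ae_of_all _ fun x => (hfC x).2)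
  have hint : ∀ m : Measure ℝ, [IsProbabilityMeasure m] →
      IntegrableOn (fun t => m.real {x | t ≤ f x}) (Ioc 0 C) := fun m _ => by
    have hanti : Antitone fun t => m.real {x | t ≤ f x} := fun _ _ hst =>
      measureReal_mono fun _ hx => hst.trans hx
    exact ((hanti.antitoneOn _).integrableOn_isCompact isCompact_Icc).mono_set Ioc_subset_Icc_self
  rw [hlayer μ, hlayer ν, ← integral_sub (hint μ) (hint ν), ← Real.norm_eq_abs]
  calc _ ≤ α * volume.real (Ioc 0 C) :=
        norm_setIntegral_le_of_norm_le_const measure_Ioc_lt_top fun t _ =>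
          abs_measureReal_sub_le_of_isUpperSet μ ν hks fun x y hxy hx => hx.trans (hf hxy)
    _ = C * α := by rw [Real.volume_real_Ioc_of_le hC, sub_zero, mul_comm]

theorem abs_integral_prod_sub_le {Y : Type*} [MeasurableSpace Y] (P Q : Measure Y)
    [IsProbabilityMeasure P] [IsProbabilityMeasure Q] {β C : ℝ}
    (hks : ∀ x, |μ.real (Iio x) - ν.real (Iio x)| ≤ α) {g : ℝ × Y → ℝ} (hg : Measurable g)
    (hgC : ∀ p, g p ∈ Icc 0 C) (hmono : ∀ y, Monotone fun x => g (x, y))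
    (hsection : ∀ x, |∫ y, g (x, y) ∂P - ∫ y, g (x, y) ∂Q| ≤ β) :
    |∫ p, g p ∂(μ.prod P) - ∫ p, g p ∂(ν.prod Q)| ≤ C * α + β := by
  have hsection_meas : ∀ x, Measurable fun y => g (x, y) := fun x => hg.comp measurable_prodMk_left
  have hsection_integral : ∀ m : Measure Y, [IsProbabilityMeasure m] →
      Monotone (fun x => ∫ y, g (x, y) ∂m) ∧ ∀ x, ∫ y, g (x, y) ∂m ∈ Icc 0 C := fun m _ =>
    ⟨fun x x' hx => integral_mono ((hsection_meas x).integrable_of_mem_Icc fun y => hgC _)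
        ((hsection_meas x').integrable_of_mem_Icc fun y => hgC _) fun y => hmono y hx,
      fun x => integral_mem_Icc_of_mem_Icc (hsection_meas x) fun y => hgC _⟩
  obtain ⟨hF_mono, hF_mem⟩ := hsection_integral P
  obtain ⟨hG_mono, hG_mem⟩ := hsection_integral Q
  set F := fun x => ∫ y, g (x, y) ∂P
  set G := fun x => ∫ y, g (x, y) ∂Q
  have hF : Integrable F ν := hF_mono.measurable.integrable_of_mem_Icc hF_mem
  have hG : Integrable G ν := hG_mono.measurable.integrable_of_mem_Icc hG_mem
  rw [integral_prod g (hg.integrable_of_mem_Icc hgC),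
    integral_prod g (hg.integrable_of_mem_Icc hgC)]
  calc |∫ x, F x ∂μ - ∫ x, G x ∂ν|
      ≤ |∫ x, F x ∂μ - ∫ x, F x ∂ν| + |∫ x, F x ∂ν - ∫ x, G x ∂ν| := abs_sub_le _ _ _
    _ ≤ C * α + β := by
      gcongr
      · exact abs_integral_sub_le_of_monotone μ ν hks hF_mono hF_mem
      · rw [← integral_sub hF hG, ← Real.norm_eq_abs]
        simpa using norm_integral_le_of_norm_le_const (μ := ν)
          (f := fun x => F x - G x) (ae_of_all _ hsection)

end KolmogorovBound

theorem integral_pi_fin_succ {X : Type*} [MeasurableSpace X] {n : ℕ}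
    (μ : Fin (n + 1) → Measure X) [∀ i, SigmaFinite (μ i)] (f : (Fin (n + 1) → X) → ℝ) :
    ∫ v, f v ∂(Measure.pi μ) =
      ∫ p, f (Fin.cons p.1 p.2) ∂((μ 0).prod (Measure.pi fun j => μ j.succ)) := by
  rw [← (measurePreserving_piFinSuccAbove μ 0).symm.integral_comp' f]
  simp only [Fin.zero_succAbove, MeasurableEquiv.piFinSuccAbove_symm_apply,
    Fin.insertNthEquiv_zero]
  rfl

theorem abs_integral_pi_sub_le_of_monotone {n : ℕ} (μ ν : Fin n → Measure ℝ)
    [∀ i, IsProbabilityMeasure (μ i)] [∀ i, IsProbabilityMeasure (ν i)] {α : Fin n → ℝ}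
    (hks : ∀ i x, |(μ i).real (Iio x) - (ν i).real (Iio x)| ≤ α i)
    {f : (Fin n → ℝ) → ℝ} (hf : Measurable f) (hmono : Monotone f) {C : ℝ}
    (hfC : ∀ v, f v ∈ Icc 0 C) :
    |∫ v, f v ∂(Measure.pi μ) - ∫ v, f v ∂(Measure.pi ν)| ≤ C * ∑ i, α i := by
  induction n with
  | zero => rw [Measure.pi_of_empty μ, Measure.pi_of_empty ν]; simp
  | succ n ih =>
    have hcons : Measurable fun p : ℝ × (Fin n → ℝ) => f (Fin.cons p.1 p.2) := by fun_prop
    rw [integral_pi_fin_succ, integral_pi_fin_succ, Fin.sum_univ_succ, mul_add]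
    refine abs_integral_prod_sub_le _ _ _ _ (hks 0) hcons (fun p => hfC _)
      (fun y x x' hx => hmono (Fin.cons_le_cons.2 ⟨hx, le_rfl⟩)) fun x => ?_
    exact ih _ _ (fun i => hks i.succ) (hcons.comp measurable_prodMk_left)
      (fun y y' hy => hmono (Fin.cons_le_cons.2 ⟨le_rfl, hy⟩)) fun y => hfC _

/-- For product distributions D, D' on ℝⁿ with coordinate-wise
Kolmogorov distances d_k(D_i, D'_i) ≤ α_i, and every coordinate-wise increasing
measurable function u : ℝⁿ → [0, ū], the expectations differ by at most ū·Σᵢ αᵢ. -/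
theorem kolmogorov_increasing_function_bound
    (n : ℕ) (μ ν : Fin n → Measure ℝ)
    [∀ i, IsProbabilityMeasure (μ i)] [∀ i, IsProbabilityMeasure (ν i)]
    (α : Fin n → ℝ)
    (hks : ∀ i : Fin n, ∀ x : ℝ,
      |((μ i) (Set.Iio x)).toReal - ((ν i) (Set.Iio x)).toReal| ≤ α i)
    (u : (Fin n → ℝ) → ℝ) (ubar : ℝ)
    (hmeas : Measurable u)
    (hbound : ∀ v, 0 ≤ u v ∧ u v ≤ ubar)
    (hinc : ∀ v w : Fin n → ℝ, (∀ i, v i ≤ w i) → u v ≤ u w) :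
    |(∫ v, u v ∂(Measure.pi μ)) - (∫ v, u v ∂(Measure.pi ν))| ≤
      ubar * ∑ i, α i :=
  abs_integral_pi_sub_le_of_monotone μ ν hks hmeas (fun v w => hinc v w) hbound
end
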